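/- Assume a(ι) = b(ι) = 1 and let S : H → H be the antipode of H_{(ι,a,b)}, i.e. the linear map satisfying m∘(S⊗id)∘Δ = η∘ε = m∘(id⊗S)∘Δ, where m is the multiplication and η : ℂ → H the unit. Then: (i) if τ ∈ V satisfies a(τ) = b(τ) = 0, then S(τ^{⊗(n−1)}) = −τ^{⊗(n−1)} for all n ≥ 1; (ii) if τ ∈ V satisfies a(τ) = 1 and b(τ) = 0, then S(τ^{⊗(n−1)}) = −(τ−ι)^{⊗(n−1)} for all n ≥ 1 (in both cases τ^{⊗0} and (τ−ι)^{⊗0} denote 1₁ ∈ H_1). -/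

import Mathlib

open scoped TensorProduct

noncomputable section

namespace PaperCHA

/-- Type synonym for the tensor algebra of `V`, to be equipped with the (non-unital)
`ι`-insertion multiplication `u ∘ v = u ⊗ ι ⊗ v`. -/
def IotaCore (V : Type) [AddCommGroup V] [Module ℂ V] (_iv : V) : Type := TensorAlgebra ℂ V

section Core

variable {V : Type} [AddCommGroup V] [Module ℂ V] {iv : V}

instance : AddCommGroup (IotaCore V iv) := inferInstanceAs (AddCommGroup (TensorAlgebra ℂ V))
instance : Module ℂ (IotaCore V iv) := inferInstanceAs (Module ℂ (TensorAlgebra ℂ V))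

/-- The identity map, regarding an element of the tensor algebra as an element of
`IotaCore V iv`. -/
def IotaCore.ofT (iv : V) : TensorAlgebra ℂ V → IotaCore V iv := id

/-- The identity map, regarding an element of `IotaCore V iv` as an element of the
tensor algebra. -/
def IotaCore.toT : IotaCore V iv → TensorAlgebra ℂ V := id

instance : NonUnitalRing (IotaCore V iv) :=
  { (inferInstanceAs (AddCommGroup (IotaCore V iv)) : AddCommGroup (IotaCore V iv)) with
    mul := fun u v => IotaCore.ofT iv (IotaCore.toT u * TensorAlgebra.ι ℂ iv * IotaCore.toT v)
    left_distrib := fun u v w => by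
      show IotaCore.toT u * TensorAlgebra.ι ℂ iv * (IotaCore.toT v + IotaCore.toT w)
          = IotaCore.toT u * TensorAlgebra.ι ℂ iv * IotaCore.toT v
            + IotaCore.toT u * TensorAlgebra.ι ℂ iv * IotaCore.toT w
      rw [mul_add]
    right_distrib := fun u v w => by
      show (IotaCore.toT u + IotaCore.toT v) * TensorAlgebra.ι ℂ iv * IotaCore.toT w
          = IotaCore.toT u * TensorAlgebra.ι ℂ iv * IotaCore.toT w
            + IotaCore.toT v * TensorAlgebra.ι ℂ iv * IotaCore.toT w
      rw [add_mul, add_mul]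
    zero_mul := fun u => by
      show (0 : TensorAlgebra ℂ V) * TensorAlgebra.ι ℂ iv * IotaCore.toT u = 0
      rw [zero_mul, zero_mul]
    mul_zero := fun u => by
      show IotaCore.toT u * TensorAlgebra.ι ℂ iv * (0 : TensorAlgebra ℂ V) = 0
      rw [mul_zero]
    mul_assoc := fun u v w => by
      show IotaCore.toT u * TensorAlgebra.ι ℂ iv * IotaCore.toT v * TensorAlgebra.ι ℂ iv
            * IotaCore.toT w
          = IotaCore.toT u * TensorAlgebra.ι ℂ iv
            * (IotaCore.toT v * TensorAlgebra.ι ℂ iv * IotaCore.toT w)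
      simp only [mul_assoc] }

instance : SMulCommClass ℂ (IotaCore V iv) (IotaCore V iv) :=
  ⟨fun c u v => by
    show c • (IotaCore.toT u * TensorAlgebra.ι ℂ iv * IotaCore.toT v)
        = IotaCore.toT u * TensorAlgebra.ι ℂ iv * (c • IotaCore.toT v)
    rw [mul_smul_comm]⟩

instance : IsScalarTower ℂ (IotaCore V iv) (IotaCore V iv) :=
  ⟨fun c u v => by
    show (c • IotaCore.toT u) * TensorAlgebra.ι ℂ iv * IotaCore.toT v
        = c • (IotaCore.toT u * TensorAlgebra.ι ℂ iv * IotaCore.toT v)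
    rw [smul_mul_assoc, smul_mul_assoc]⟩

end Core

/-- The Hopf algebra `H_{(ι,a,b)}` of the paper, as a graded algebra: the unitalization
of the tensor algebra of `V` equipped with the `ι`-insertion product.  Its `n`-th graded
component (`n ≥ 1`) is `V^{⊗(n-1)}`, and the `0`-th is `ℂ·1`. -/
abbrev HAlg (V : Type) [AddCommGroup V] [Module ℂ V] (iv : V) : Type :=
  Unitization ℂ (IotaCore V iv)

section HAlg

variable {V : Type} [AddCommGroup V] [Module ℂ V]

/-- The pure tensor `x₁ ⊗ ⋯ ⊗ x_{n-1} ∈ H_n` associated to a list `[x₁, …, x_{n-1}]`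
(the empty list gives `1₁ ∈ H_1`). -/
def pt (iv : V) (l : List V) : HAlg V iv :=
  Unitization.inr (IotaCore.ofT iv ((l.map (TensorAlgebra.ι ℂ)).prod))

/-- The grading of `H`: `grade iv 0 = ℂ·1` and `grade iv (n+1)` is the span of the
pure tensors of `n` vectors, i.e. `V^{⊗ n}`. -/
def grade (iv : V) : ℕ → Submodule ℂ (HAlg V iv)
  | 0 => Submodule.span ℂ {1}
  | (n + 1) => Submodule.span ℂ {x | ∃ l : List V, l.length = n ∧ x = pt iv l}

/-- The linear projection `ε : H → ℂ` onto the degree-zero component `H_0 = ℂ·1`. -/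
def eps (iv : V) : HAlg V iv →ₗ[ℂ] ℂ :=
  (Unitization.fstHom ℂ (IotaCore V iv)).toLinearMap

/-- Auxiliary function computing `T_φ(S; ψ)` on the sorted list `s₁ < ⋯ < s_k` of a
nonempty subset `S ⊆ {1, …, n}`: returns the scalar `c` (together with all scalar factors
`φ(ψ_{s_i})` coming from non-consecutive entries) and the list `[v₁, …, v_{k-1}]`. -/
def Tlist (iv : V) (φ : V →ₗ[ℂ] ℂ) (ψ : ℕ → V) (n : ℕ) : List ℕ → ℂ × List V
  | [] => (1, [])
  | [s] => (if s = n then 1 else φ (ψ s), [])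
  | s :: t :: rest =>
    let p := Tlist iv φ ψ n (t :: rest)
    if t = s + 1 then (p.1, ψ s :: p.2) else (φ (ψ s) * p.1, iv :: p.2)

/-- The element `T_φ(S; ψ) ∈ H` for a subset `S ⊆ {1, …, n}` (one gets `1 ∈ H_0` for
`S = ∅`, and `c • (v₁ ⊗ ⋯ ⊗ v_{k-1}) ∈ H_k` for `S = {s₁ < ⋯ < s_k}`). -/
def Tfun (iv : V) (φ : V →ₗ[ℂ] ℂ) (ψ : ℕ → V) (n : ℕ) (S : Finset ℕ) : HAlg V iv :=
  if S = ∅ then 1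
  else (Tlist iv φ ψ n (S.sort (· ≤ ·))).1 • pt iv (Tlist iv φ ψ n (S.sort (· ≤ ·))).2

/-- The indexing `ψ : {1, …, n} → V` (1-based) associated to a list `[ψ₁, …, ψ_{n-1}]`. -/
def psiOf (l : List V) : ℕ → V := fun j => l.getD (j - 1) 0

/-- The defining property of the coproduct `Δ` of `H_{(ι,a,b)}`: `Δ(1) = 1 ⊗ 1` and, on
a pure tensor `ψ = ψ₁ ⊗ ⋯ ⊗ ψ_{n-1} ∈ H_n`,
`Δ(ψ) = ∑_{A ⊆ {1,…,n}} T_a(A; ψ) ⊗ T_b(Aᶜ; ψ)`. -/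
def DeltaSpec (iv : V) (a b : V →ₗ[ℂ] ℂ)
    (Δ : HAlg V iv →ₗ[ℂ] HAlg V iv ⊗[ℂ] HAlg V iv) : Prop :=
  Δ 1 = 1 ⊗ₜ[ℂ] 1 ∧
  ∀ l : List V,
    Δ (pt iv l) =
      ∑ A ∈ (Finset.Icc 1 (l.length + 1)).powerset,
        Tfun iv a (psiOf l) (l.length + 1) A ⊗ₜ[ℂ]
          Tfun iv b (psiOf l) (l.length + 1) (Finset.Icc 1 (l.length + 1) \ A)

end HAlg

end PaperCHA


/-!
When `b τ = 0`, a summand `T_a(A; ψ) ⊗ T_b(Aᶜ; ψ)` of `Δ(τ^{⊗m})` vanishes unless `Aᶜ` is a final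
segment of `{1, …, m+1}`, since a gap in `Aᶜ`, or a last element below `m+1`, contributes a
factor `b τ`. Hence `Δ(τ^{⊗m}) = 1 ⊗ τ^{⊗m} + a(τ) ∑_{i<m} τ^{⊗i} ⊗ τ^{⊗(m-1-i)} + τ^{⊗m} ⊗ 1`,
and the antipode satisfies `S(τ^{⊗m}) = -τ^{⊗m} - a(τ) ∑_{i<m} S(τ^{⊗i}) · τ^{⊗(m-1-i)}`.
For `a τ = 0` this is (i). For `a τ = 1` we get (ii) by strong induction, because in the tensor
algebra `∑_{i<m} (τ-ι)^i ι τ^{m-1-i}` telescopes to `τ^m - (τ-ι)^m`.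
-/

open Finset

theorem Finset.sum_powerset_Icc_eq_sum_range {M : Type*} [AddCommMonoid M] (n : ℕ)
    (f : Finset ℕ → M) (hf : ∀ A ⊆ Icc 1 n, (∀ k ≤ n, A ≠ Icc 1 k) → f A = 0) :
    ∑ A ∈ (Icc 1 n).powerset, f A = ∑ k ∈ range (n + 1), f (Icc 1 k) := by
  have hinj : Set.InjOn (Icc 1 ·) (range (n + 1)) := fun k _ l _ hkl => by
    simpa using congrArg card hkl
  rw [← sum_image hinj]
  refine (sum_subset ?_ fun A hA hAk => hf A (mem_powerset.1 hA) ?_).symm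
  · intro A hA
    obtain ⟨k, hk, rfl⟩ := mem_image.1 hA
    exact mem_powerset.2 (Icc_subset_Icc_right (by simpa [Nat.lt_succ_iff] using hk))
  · exact fun k hk hA => hAk (mem_image.2 ⟨k, by simpa [Nat.lt_succ_iff] using hk, hA.symm⟩)

theorem Finset.sort_Ico_add (s k : ℕ) : (Ico s (s + k)).sort (· ≤ ·) = List.range' s k := by
  rw [← List.toFinset_range'_1, List.toFinset_sort _ List.nodup_range']
  exact (List.pairwise_lt_range' _).imp le_of_lt

theorem sum_range_pow_mul_sub_mul_pow {R : Type*} [Ring R] (x y : R) (m : ℕ) :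
    ∑ i ∈ range m, x ^ i * (y - x) * y ^ (m - 1 - i) = y ^ m - x ^ m := by
  calc ∑ i ∈ range m, x ^ i * (y - x) * y ^ (m - 1 - i)
      = ∑ i ∈ range m, (x ^ i * y ^ (m - i) - x ^ (i + 1) * y ^ (m - (i + 1))) := by
        refine sum_congr rfl fun i hi => ?_
        obtain ⟨k, rfl⟩ : ∃ k, m = i + 1 + k := ⟨m - (i + 1), by simp at hi; omega⟩
        rw [show i + 1 + k - i = k + 1 by omega, show i + 1 + k - 1 - i = k by omega,
          show i + 1 + k - (i + 1) = k by omega, pow_succ', pow_succ]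
        noncomm_ring
    _ = y ^ m - x ^ m := by rw [sum_range_sub' (fun i => x ^ i * y ^ (m - i))]; simp

namespace PaperCHA

theorem psiOf_replicate {V : Type} [AddCommGroup V] (τ : V) (m : ℕ) :
    ∀ j, 1 ≤ j → j < m + 1 → psiOf (List.replicate m τ) j = τ := fun j _ _ => by
  simp [psiOf, List.getD_eq_getElem?_getD, show j - 1 < m by omega]

variable {V : Type} [AddCommGroup V] [Module ℂ V]

section Tlist

variable (iv : V) (φ : V →ₗ[ℂ] ℂ) {τ : V} {ψ : ℕ → V} {n : ℕ}

theorem Tlist_range' (hψ : ∀ j, 1 ≤ j → j < n → ψ j = τ) (k : ℕ) :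
    ∀ s, 1 ≤ s → s + k ≤ n →
      Tlist iv φ ψ n (List.range' s (k + 1))
        = (if s + k = n then 1 else φ τ, List.replicate k τ) := by
  induction k with
  | zero =>
    intro s hs hsn
    rcases hsn.eq_or_lt with rfl | hlt
    · simp [Tlist]
    · simp [Tlist, hψ s hs hlt]
  | succ k ih =>
    intro s hs hsn
    have htail := ih (s + 1) (by omega) (by omega)
    rw [List.range'_succ] at htail
    rw [List.range'_succ, List.range'_succ, Tlist, htail, hψ s hs (by omega),
      show s + 1 + k = s + (k + 1) by omega]
    simp [List.replicate_succ]

theorem Tlist_fst_eq_zero_or_eq_range' (hφ : φ τ = 0) (hψ : ∀ j, 1 ≤ j → j < n → ψ j = τ)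
    (rest : List ℕ) :
    ∀ s, 1 ≤ s → (s :: rest).Pairwise (· < ·) → (∀ x ∈ s :: rest, x ≤ n) →
      (Tlist iv φ ψ n (s :: rest)).1 = 0 ∨ s :: rest = List.range' s (n + 1 - s) := by
  induction rest with
  | nil =>
    intro s hs _ hn
    have hsn : s ≤ n := hn s (by simp)
    rcases hsn.eq_or_lt with rfl | hlt
    · simp
    · simp [Tlist, hψ s hs hlt, hlt.ne, hφ]
  | cons t rest ih =>
    intro s hs hsort hn
    have hst : s < t := List.rel_of_pairwise_cons hsort (by simp)
    have htn : t ≤ n := hn t (by simp)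
    by_cases hconsec : t = s + 1
    · subst hconsec
      rcases ih (s + 1) (by omega) hsort.of_cons (fun x hx => hn x (by simp [hx])) with
        h0 | htail
      · simp [Tlist, h0]
      · right
        rw [htail, show n + 1 - s = n + 1 - (s + 1) + 1 by omega, List.range'_succ]
    · left
      simp [Tlist, hconsec, hψ s hs (by omega), hφ]

theorem Tfun_empty : Tfun iv φ ψ n ∅ = 1 := by
  simp [Tfun]

theorem Tfun_Icc (hψ : ∀ j, 1 ≤ j → j < n → ψ j = τ) {j k : ℕ} (hj : 1 ≤ j) (hjk : j ≤ k)
    (hkn : k ≤ n) :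
    Tfun iv φ ψ n (Icc j k) = (if k = n then 1 else φ τ) • pt iv (List.replicate (k - j) τ) := by
  have hsort : (Icc j k).sort (· ≤ ·) = List.range' j (k - j + 1) := by
    rw [← Ico_add_one_right_eq_Icc, show k + 1 = j + (k - j + 1) by omega, sort_Ico_add]
  rw [Tfun, if_neg (nonempty_Icc.2 hjk).ne_empty, hsort,
    Tlist_range' iv φ hψ _ j hj (by omega), show j + (k - j) = k by omega]

theorem Tfun_eq_zero_or_eq_Icc (hφ : φ τ = 0) (hψ : ∀ j, 1 ≤ j → j < n → ψ j = τ)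
    {B : Finset ℕ} (hB : B ⊆ Icc 1 n) (hne : B.Nonempty) :
    Tfun iv φ ψ n B = 0 ∨ ∃ j ≤ n, B = Icc j n := by
  obtain ⟨s, rest, hL⟩ : ∃ s rest, B.sort (· ≤ ·) = s :: rest :=
    List.exists_cons_of_ne_nil (by simpa [← List.length_pos_iff] using hne.card_pos)
  have hmem : ∀ x ∈ s :: rest, 1 ≤ x ∧ x ≤ n := fun x hx =>
    mem_Icc.1 (hB ((mem_sort _).1 (hL ▸ hx)))
  obtain ⟨hs1, hsn⟩ := hmem s (by simp)
  rcases Tlist_fst_eq_zero_or_eq_range' iv φ hφ hψ rest s hs1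
      (hL ▸ (sortedLT_sort B).pairwise) (fun x hx => (hmem x hx).2) with h0 | hrange
  · left
    rw [Tfun, if_neg hne.ne_empty, hL, h0, zero_smul]
  · right
    refine ⟨s, hsn, ?_⟩
    rw [← sort_toFinset B (· ≤ ·), hL, hrange, List.toFinset_range'_1,
      show s + (n + 1 - s) = n + 1 by omega, Ico_add_one_right_eq_Icc]

theorem Tfun_sdiff_eq_zero (hφ : φ τ = 0) (hψ : ∀ j, 1 ≤ j → j < n → ψ j = τ)
    {A : Finset ℕ} (hA : A ⊆ Icc 1 n) (hA_ne : ∀ k ≤ n, A ≠ Icc 1 k) :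
    Tfun iv φ ψ n (Icc 1 n \ A) = 0 := by
  rcases (Icc 1 n \ A).eq_empty_or_nonempty with hempty | hne
  · exact absurd (hA.antisymm (sdiff_eq_empty_iff_subset.1 hempty)) (hA_ne n le_rfl)
  rcases Tfun_eq_zero_or_eq_Icc iv φ hφ hψ sdiff_subset hne with h0 | ⟨j, hjn, hj⟩
  · exact h0
  refine absurd ?_ (hA_ne (j - 1) (by omega))
  rw [← Finset.sdiff_sdiff_eq_self hA, hj]
  ext x
  simp only [mem_sdiff, mem_Icc]
  omega

end Tlist

def ofTensorAlgebra (iv : V) : TensorAlgebra ℂ V →ₗ[ℂ] HAlg V iv where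
  toFun p := Unitization.inr (IotaCore.ofT iv p)
  map_add' _ _ := Unitization.inr_add ℂ _ _
  map_smul' c _ := Unitization.inr_smul ℂ c _

theorem ofTensorAlgebra_mul (iv : V) (p q : TensorAlgebra ℂ V) :
    ofTensorAlgebra iv p * ofTensorAlgebra iv q
      = ofTensorAlgebra iv (p * TensorAlgebra.ι ℂ iv * q) :=
  (Unitization.inr_mul ℂ _ _).symm

theorem pt_replicate (iv v : V) (k : ℕ) :
    pt iv (List.replicate k v) = ofTensorAlgebra iv (TensorAlgebra.ι ℂ v ^ k) := by
  rw [pt, List.map_replicate, List.prod_replicate]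
  rfl

theorem eps_pt (iv : V) (l : List V) : eps iv (pt iv l) = 0 := by
  simp [eps, pt]

theorem sum_pt_replicate_sub_mul (iv τ : V) (m : ℕ) :
    ∑ i ∈ range m, pt iv (List.replicate i (τ - iv)) * pt iv (List.replicate (m - 1 - i) τ)
      = pt iv (List.replicate m τ) - pt iv (List.replicate m (τ - iv)) := by
  have htelescope := sum_range_pow_mul_sub_mul_pow (TensorAlgebra.ι ℂ (τ - iv))
    (TensorAlgebra.ι ℂ τ) m
  rw [map_sub, sub_sub_cancel] at htelescope
  simp only [pt_replicate, ofTensorAlgebra_mul, ← map_sum, map_sub, htelescope]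

section Antipode

variable {iv : V} {a b : V →ₗ[ℂ] ℂ} {Δ : HAlg V iv →ₗ[ℂ] HAlg V iv ⊗[ℂ] HAlg V iv}

theorem Delta_pt_replicate (hΔ : DeltaSpec iv a b Δ) {τ : V} (hb : b τ = 0) (m : ℕ) :
    Δ (pt iv (List.replicate m τ))
      = 1 ⊗ₜ pt iv (List.replicate m τ)
        + a τ • ∑ i ∈ range m, pt iv (List.replicate i τ) ⊗ₜ pt iv (List.replicate (m - 1 - i) τ)
        + pt iv (List.replicate m τ) ⊗ₜ 1 := by
  have hψ := psiOf_replicate τ m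
  have hsdiff : ∀ k, Icc 1 (m + 1) \ Icc 1 k = Icc (k + 1) (m + 1) := fun k => by
    ext x
    simp only [mem_sdiff, mem_Icc]
    omega
  rw [hΔ.2, List.length_replicate, sum_powerset_Icc_eq_sum_range _ _
    fun A hA hA_ne => by rw [Tfun_sdiff_eq_zero iv b hb hψ hA hA_ne, TensorProduct.tmul_zero]]
  simp only [hsdiff]
  have hfull (φ : V →ₗ[ℂ] ℂ) :
      Tfun iv φ (psiOf (List.replicate m τ)) (m + 1) (Icc 1 (m + 1))
        = pt iv (List.replicate m τ) := by
    simp [Tfun_Icc iv φ hψ le_rfl (by omega : 1 ≤ m + 1) le_rfl]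
  have hmiddle : ∀ k ∈ range m,
      Tfun iv a (psiOf (List.replicate m τ)) (m + 1) (Icc 1 (k + 1)) ⊗ₜ[ℂ]
          Tfun iv b (psiOf (List.replicate m τ)) (m + 1) (Icc (k + 1 + 1) (m + 1))
        = a τ • pt iv (List.replicate k τ) ⊗ₜ pt iv (List.replicate (m - 1 - k) τ) := by
    intro k hk
    have hkm : k < m := mem_range.1 hk
    rw [Tfun_Icc iv a hψ le_rfl (by omega) (by omega),
      Tfun_Icc iv b hψ (by omega) (by omega) le_rfl, if_neg (by omega), if_pos rfl, one_smul,
      TensorProduct.smul_tmul', show m + 1 - (k + 1 + 1) = m - 1 - k by omega, Nat.add_sub_cancel]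
  rw [sum_range_succ, sum_range_succ', smul_sum, sum_congr rfl hmiddle, zero_add, hfull, hfull,
    Icc_eq_empty (by omega : ¬1 ≤ 0), Icc_eq_empty (by omega : ¬m + 1 + 1 ≤ m + 1), Tfun_empty,
    Tfun_empty]
  abel

theorem antipode_one (hΔ : DeltaSpec iv a b Δ) {S : HAlg V iv →ₗ[ℂ] HAlg V iv}
    (hS : ∀ x : HAlg V iv,
      LinearMap.mul' ℂ (HAlg V iv) (TensorProduct.map S LinearMap.id (Δ x))
        = algebraMap ℂ (HAlg V iv) (eps iv x)) :
    S 1 = 1 := by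
  simpa [hΔ.1, eps] using hS 1

theorem antipode_pt_replicate (hΔ : DeltaSpec iv a b Δ) {S : HAlg V iv →ₗ[ℂ] HAlg V iv}
    (hS : ∀ x : HAlg V iv,
      LinearMap.mul' ℂ (HAlg V iv) (TensorProduct.map S LinearMap.id (Δ x))
        = algebraMap ℂ (HAlg V iv) (eps iv x))
    {τ : V} (hb : b τ = 0) (m : ℕ) :
    S (pt iv (List.replicate m τ))
      = -pt iv (List.replicate m τ)
        - a τ • ∑ i ∈ range m,
            S (pt iv (List.replicate i τ)) * pt iv (List.replicate (m - 1 - i) τ) := by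
  have h := hS (pt iv (List.replicate m τ))
  simp only [Delta_pt_replicate hΔ hb, eps_pt, map_zero, map_add, map_smul, map_sum,
    TensorProduct.map_tmul, LinearMap.mul'_apply, LinearMap.id_coe, id_eq, antipode_one hΔ hS,
    one_mul, mul_one] at h
  refine eq_of_sub_eq_zero ?_
  rw [← h]
  abel

end Antipode

end PaperCHA

open PaperCHA in
theorem antipode_on_generators_general
    {V : Type} [AddCommGroup V] [Module ℂ V] (iv : V) (a b : V →ₗ[ℂ] ℂ)
    (Δ : HAlg V iv →ₗ[ℂ] HAlg V iv ⊗[ℂ] HAlg V iv) (hΔ : DeltaSpec iv a b Δ)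
    (S : HAlg V iv →ₗ[ℂ] HAlg V iv)
    (hS : ∀ x : HAlg V iv,
      LinearMap.mul' ℂ (HAlg V iv) (TensorProduct.map S LinearMap.id (Δ x))
        = algebraMap ℂ (HAlg V iv) (eps iv x)) :
    (∀ τ : V, a τ = 0 → b τ = 0 → ∀ n : ℕ, 1 ≤ n →
        S (pt iv (List.replicate (n - 1) τ)) = -pt iv (List.replicate (n - 1) τ)) ∧
    (∀ τ : V, a τ = 1 → b τ = 0 → ∀ n : ℕ, 1 ≤ n →
        S (pt iv (List.replicate (n - 1) τ)) = -pt iv (List.replicate (n - 1) (τ - iv))) := by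
  refine ⟨fun τ haτ hbτ n _ => ?_, fun τ haτ hbτ n _ => ?_⟩
  · rw [antipode_pt_replicate hΔ hS hbτ, haτ, zero_smul, sub_zero]
  · induction n - 1 using Nat.strong_induction_on with
    | _ m ih =>
      have hsum : ∑ i ∈ Finset.range m,
          S (pt iv (List.replicate i τ)) * pt iv (List.replicate (m - 1 - i) τ)
            = -(pt iv (List.replicate m τ) - pt iv (List.replicate m (τ - iv))) := by
        rw [← sum_pt_replicate_sub_mul, ← Finset.sum_neg_distrib]
        exact Finset.sum_congr rfl fun i hi => by rw [ih i (Finset.mem_range.1 hi), neg_mul]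
      rw [antipode_pt_replicate hΔ hS hbτ, haτ, one_smul, hsum]
      abel

open PaperCHA in
/-- **Corollary 5.7 (antipode on generators):** let `S` be the antipode of `H_{(ι,a,b)}`.
(i) If `a(τ) = b(τ) = 0`, then `S(τ^{⊗(n-1)}) = −τ^{⊗(n-1)}` for all `n ≥ 1`.
(ii) If `a(τ) = 1` and `b(τ) = 0`, then `S(τ^{⊗(n-1)}) = −(τ−ι)^{⊗(n-1)}` for all
`n ≥ 1`. -/
theorem antipode_on_generators
    {V : Type} [AddCommGroup V] [Module ℂ V] (iv : V) (a b : V →ₗ[ℂ] ℂ)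
    (ha : a iv = 1) (hb : b iv = 1)
    (Δ : HAlg V iv →ₗ[ℂ] HAlg V iv ⊗[ℂ] HAlg V iv) (hΔ : DeltaSpec iv a b Δ)
    (S : HAlg V iv →ₗ[ℂ] HAlg V iv)
    (hS : ∀ x : HAlg V iv,
      LinearMap.mul' ℂ (HAlg V iv) (TensorProduct.map S LinearMap.id (Δ x))
        = algebraMap ℂ (HAlg V iv) (eps iv x))
    (hS' : ∀ x : HAlg V iv,
      LinearMap.mul' ℂ (HAlg V iv) (TensorProduct.map LinearMap.id S (Δ x))
        = algebraMap ℂ (HAlg V iv) (eps iv x)) :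
    (∀ τ : V, a τ = 0 → b τ = 0 → ∀ n : ℕ, 1 ≤ n →
        S (pt iv (List.replicate (n - 1) τ)) = -pt iv (List.replicate (n - 1) τ)) ∧
    (∀ τ : V, a τ = 1 → b τ = 0 → ∀ n : ℕ, 1 ≤ n →
        S (pt iv (List.replicate (n - 1) τ)) = -pt iv (List.replicate (n - 1) (τ - iv))) :=
  antipode_on_generators_general iv a b Δ hΔ S hS
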